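/- arXiv:1604.06038 — 2 statements merged into one kernel-verified Lean document; each statement's English description precedes it below -/
import Mathlib

section
/- Let A be a finite set with a strict linear order < and let s ⊆ < be a relation such that every element except the maximum has at least one s-successor and every element except the minimum has at least one s-predecessor, and every element has at most one s-successor and at most one s-predecessor. Starting from the minimum and repeatedly following s reaches the maximum, and the resulting s-path visits every element of A. -/
/-!
Every `s`-edge is a covering pair: if `s x y` and `v` covers `x` with `v < y`, then by
well-founded induction the `s`-predecessor of `v` is `x`, so `s x v` and `s x y` force `v = y`.
Conversely a covering pair `x ⋖ y` is an `s`-edge, since the `s`-predecessor of `y` is covered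
by `y` as well. Hence in a finite linear order the increasing enumeration `Fin (n + 1) ≃o A` is
an `s`-path from the minimum to the maximum through every element.
-/

section CovBy

variable {α : Type*} [LinearOrder α] [WellFoundedLT α] {s : α → α → Prop}

theorem covBy_of_rel (hlt : ∀ x y, s x y → x < y) (hpred : ∀ y, ¬IsMin y → ∃ x, s x y)
    (hfun : ∀ x y z, s x y → s x z → y = z) {x y : α} (hxy : s x y) : x ⋖ y := by
  induction y using WellFoundedLT.induction generalizing x with
  | _ y ih =>
  have := IsStronglyAtomic.of_wellFounded_lt (α := α) wellFounded_lt
  obtain ⟨v, hxv, hvy⟩ := exists_covBy_le_of_lt (hlt x y hxy)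
  obtain rfl | hvy := hvy.eq_or_lt
  · exact hxv
  obtain ⟨w, hwv⟩ := hpred v (not_isMin_of_lt hxv.lt)
  obtain rfl : w = x := (ih v hvy hwv).unique_left hxv
  exact absurd (hfun _ _ _ hwv hxy) hvy.ne

theorem rel_iff_covBy (hlt : ∀ x y, s x y → x < y) (hpred : ∀ y, ¬IsMin y → ∃ x, s x y)
    (hfun : ∀ x y z, s x y → s x z → y = z) {x y : α} : s x y ↔ x ⋖ y := by
  refine ⟨covBy_of_rel hlt hpred hfun, fun hxy => ?_⟩
  obtain ⟨w, hwy⟩ := hpred y (not_isMin_of_lt hxy.lt)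
  rwa [(covBy_of_rel hlt hpred hfun hwy).unique_left hxy] at hwy

end CovBy

theorem Fin.castSucc_covBy_succ {n : ℕ} (i : Fin n) : i.castSucc ⋖ i.succ :=
  ⟨i.castSucc_lt_succ, fun j hij hji => by
    simp only [Fin.lt_def, Fin.val_castSucc, Fin.val_succ] at hij hji; omega⟩

theorem stmt_12_general {A : Type*} [Fintype A] [LinearOrder A]
    (hne : (Finset.univ : Finset A).Nonempty)
    (s : A → A → Prop)
    (hlt : ∀ x y, s x y → x < y)
    (hpred : ∀ y, y ≠ Finset.univ.min' hne → ∃ x, s x y)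
    (hfun : ∀ x y z, s x y → s x z → y = z) :
    ∃ (n : ℕ) (e : Fin (n + 1) → A),
      e 0 = Finset.univ.min' hne ∧
      e (Fin.last n) = Finset.univ.max' hne ∧
      (∀ i : Fin n, s (e i.castSucc) (e i.succ)) ∧
      Function.Surjective e := by
  have hpred' : ∀ y, ¬IsMin y → ∃ x, s x y := fun y hy =>
    hpred y fun h => hy (h ▸ fun b _ => Finset.min'_le _ b (Finset.mem_univ b))
  obtain ⟨n, hn⟩ := Nat.exists_eq_succ_of_ne_zero (Finset.card_ne_zero.2 hne)
  let e : Fin (n + 1) ≃o A := Fintype.orderIsoFinOfCardEq A hn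
  refine ⟨n, e, ?_, ?_, fun i => ?_, e.surjective⟩
  · exact ((Finset.min'_eq_iff _ _ _).2 ⟨Finset.mem_univ _, fun b _ => by
      simpa using e.monotone (Fin.zero_le (e.symm b))⟩).symm
  · exact ((Finset.max'_eq_iff _ _ _).2 ⟨Finset.mem_univ _, fun b _ => by
      simpa using e.monotone (Fin.le_last (e.symm b))⟩).symm
  · exact (rel_iff_covBy hlt hpred' hfun).2
      ((apply_covBy_apply_iff e).2 (Fin.castSucc_covBy_succ i))

theorem stmt_12 {A : Type*} [Fintype A] [LinearOrder A]
    (hne : (Finset.univ : Finset A).Nonempty)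
    (s : A → A → Prop)
    (hlt : ∀ x y, s x y → x < y)
    (hsucc : ∀ x, x ≠ Finset.univ.max' hne → ∃ y, s x y)
    (hpred : ∀ y, y ≠ Finset.univ.min' hne → ∃ x, s x y)
    (hfun : ∀ x y z, s x y → s x z → y = z)
    (hinj : ∀ x y z, s x z → s y z → x = y) :
    ∃ (n : ℕ) (e : Fin (n + 1) → A),
      e 0 = Finset.univ.min' hne ∧
      e (Fin.last n) = Finset.univ.max' hne ∧
      (∀ i : Fin n, s (e i.castSucc) (e i.succ)) ∧
      Function.Surjective e :=
  stmt_12_general hne s hlt hpred hfun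
end

section
/- Let k ≥ 1 and let σ_1, ..., σ_k be a sequence of tuples σ_i = (P_i, c_i, S_i, L_i, G_i) where P_i, S_i are multisets of size at most 1 over a finite set Π, c_i ∈ Π, and L_i, G_i are multisets over Π (values in a truncated commutative monoid ℕ_c), satisfying the edge condition: for each i < k, P_{i+1} = {c_i}, c_{i+1} is the element of S_i (so S_i is a singleton), L_{i+1} = L_i ∪ P_i, and G_i = G_{i+1} ∪ S_{i+1}. Suppose also L_1 = ∅, P_1 = ∅, G_k = ∅, S_k = ∅. Then for every i, L_i equals the ℕ_c-truncated multiset {c_1, ..., c_{i-2}} (all elements strictly before the predecessor) and G_i equals the truncated multiset {c_{i+2}, ..., c_k}. -/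
/-!
Since truncation at `c` saturates to `⊤`, truncating after every step of an accumulation gives the
same result as truncating once at the end; so `L i` is the truncated sum of the multiplicities
contributed by `P 0, …, P (i - 1)`, i.e. of `c_0, …, c_(i - 2)`. Reading the path backwards
exchanges `P, L` with `S, G`, which gives the statement for `G`.
-/

/-- Truncation of an extended natural number at `c`. -/
def cutc (c : ℕ) (x : ℕ∞) : ℕ∞ := if x ≤ (c : ℕ∞) then x else ⊤

/-- Multiplicity of `p` in a multiset of size at most one (an `Option`). -/
def optCount {Pi : Type*} [DecidableEq Pi] (o : Option Pi) (p : Pi) : ℕ∞ :=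
  if o = some p then 1 else 0

open Finset

theorem cutc_cutc_add (c : ℕ) (a b : ℕ∞) : cutc c (cutc c a + b) = cutc c (a + b) := by
  by_cases ha : a ≤ c
  · simp only [cutc, ha, if_true]
  · have hab : ¬a + b ≤ c := fun h => ha (le_self_add.trans h)
    simp [cutc, ha, hab]

theorem eq_cutc_of_succ_eq_cutc_add {c k : ℕ} {x s : Fin (k + 1) → ℕ∞} {a : Fin k → ℕ∞}
    (hx₀ : x 0 = 0) (hs₀ : s 0 = 0)
    (hx : ∀ i, x i.succ = cutc c (x i.castSucc + a i))
    (hs : ∀ i, s i.succ = s i.castSucc + a i) (i : Fin (k + 1)) :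
    x i = cutc c (s i) := by
  induction i using Fin.induction with
  | zero => simp [hx₀, hs₀, cutc]
  | succ i ih => rw [hx, hs, ih, cutc_cutc_add]

theorem Fin.card_filter_val_lt_succ {N : ℕ} (q : Fin N → Prop) [DecidablePred q] (m : Fin N) :
    #{j : Fin N | (j : ℕ) < m + 1 ∧ q j} =
      #{j : Fin N | (j : ℕ) < m ∧ q j} + if q m then 1 else 0 := by
  simp only [card_filter]
  have hm : (if q m then 1 else 0) = ∑ j, if j = m then (if q j then 1 else 0) else 0 := by simp
  rw [hm, ← sum_add_distrib]
  refine sum_congr rfl fun j _ => ?_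
  by_cases hj : j = m
  · subst hj
    simp
  · have hjm : (j : ℕ) ≠ m := Fin.val_ne_of_ne hj
    simp only [hj, if_false, add_zero]
    exact if_congr (and_congr_left' (by omega)) rfl rfl

section Chain

variable {Pi : Type*} [DecidableEq Pi] {k : ℕ} {P : Fin (k + 1) → Option Pi} {cs : Fin (k + 1) → Pi}

theorem card_earlier_succ (hP : ∀ i : Fin k, P i.succ = some (cs i.castSucc)) (hP₀ : P 0 = none)
    (p : Pi) (i : Fin k) :
    (#{j : Fin (k + 1) | (j : ℕ) + 1 < i.succ ∧ cs j = p} : ℕ∞) =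
      #{j : Fin (k + 1) | (j : ℕ) + 1 < i.castSucc ∧ cs j = p} + optCount (P i.castSucc) p := by
  rcases i with ⟨_ | m, hm⟩
  · have hempty : ∀ n ≤ 1, #{j : Fin (k + 1) | (j : ℕ) + 1 < n ∧ cs j = p} = 0 := fun n hn => by
      simp only [card_eq_zero, filter_eq_empty_iff]
      omega
    simp only [Fin.succ_mk, Fin.castSucc_mk, zero_add, hempty 1 le_rfl, hempty 0 zero_le_one]
    simp [hP₀, optCount]
  · simp only [Fin.succ_mk, Fin.castSucc_mk, add_lt_add_iff_right]
    rw [show P ⟨m + 1, _⟩ = some (cs ⟨m, _⟩) from hP ⟨m, by omega⟩]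
    rw [Fin.card_filter_val_lt_succ (fun j => cs j = p) ⟨m, by omega⟩]
    simp [optCount]

theorem eq_cutc_card_earlier {c : ℕ} {L : Fin (k + 1) → Pi → ℕ∞}
    (hP : ∀ i : Fin k, P i.succ = some (cs i.castSucc)) (hP₀ : P 0 = none)
    (hL : ∀ (i : Fin k) p, L i.succ p = cutc c (L i.castSucc p + optCount (P i.castSucc) p))
    (hL₀ : ∀ p, L 0 p = 0) (i : Fin (k + 1)) (p : Pi) :
    L i p = cutc c #{j : Fin (k + 1) | (j : ℕ) + 1 < i ∧ cs j = p} := by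
  refine eq_cutc_of_succ_eq_cutc_add (x := fun i => L i p)
    (s := fun i => #{j : Fin (k + 1) | (j : ℕ) + 1 < i ∧ cs j = p})
    (hL₀ p) ?_ (fun i => hL i p) (card_earlier_succ hP hP₀ p) i
  simp

end Chain

theorem card_later_eq_card_earlier_rev {α : Type*} [DecidableEq α] {k : ℕ}
    (f : Fin (k + 1) → α) (a : α) (i : Fin (k + 1)) :
    #{j : Fin (k + 1) | (i : ℕ) + 1 < j ∧ f j = a} =
      #{j : Fin (k + 1) | (j : ℕ) + 1 < i.rev ∧ f j.rev = a} := by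
  refine card_bij' (fun j _ => j.rev) (fun j _ => j.rev) ?_ ?_ (by simp) (by simp)
  all_goals
    intro j
    simp only [mem_filter, mem_univ, true_and, Fin.val_rev, Fin.rev_rev]
    exact fun ⟨h, hf⟩ => ⟨by omega, hf⟩

theorem stmt_16_general {Pi : Type*} [DecidableEq Pi] (c k : ℕ)
    (P S : Fin (k + 1) → Option Pi) (cs : Fin (k + 1) → Pi)
    (L G : Fin (k + 1) → Pi → ℕ∞)
    -- edge conditions along the path
    (hedge : ∀ i : Fin k,
      P i.succ = some (cs i.castSucc) ∧
      S i.castSucc = some (cs i.succ) ∧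
      (∀ p, L i.succ p = cutc c (L i.castSucc p + optCount (P i.castSucc) p)) ∧
      (∀ p, G i.castSucc p = cutc c (G i.succ p + optCount (S i.succ) p)))
    -- boundary conditions: source node and target node
    (hL0 : ∀ p, L 0 p = 0) (hP0 : P 0 = none)
    (hGk : ∀ p, G (Fin.last k) p = 0) (hSk : S (Fin.last k) = none) :
    ∀ (i : Fin (k + 1)) (p : Pi),
      L i p = cutc c
        ((Finset.univ.filter (fun j : Fin (k + 1) => (j : ℕ) + 1 < (i : ℕ) ∧ cs j = p)).card
          : ℕ∞) ∧
      G i p = cutc c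
        ((Finset.univ.filter (fun j : Fin (k + 1) => (i : ℕ) + 1 < (j : ℕ) ∧ cs j = p)).card
          : ℕ∞) := by
  intro i p
  refine ⟨eq_cutc_card_earlier (fun j => (hedge j).1) hP0 (fun j => (hedge j).2.2.1) hL0 i p, ?_⟩
  have hG := eq_cutc_card_earlier (P := fun j => S j.rev) (cs := fun j => cs j.rev)
    (L := fun j => G j.rev)
    (fun j => by simpa only [Fin.rev_succ, Fin.rev_castSucc] using (hedge j.rev).2.1)
    (by simpa only [Fin.rev_zero] using hSk)
    (fun j => by simpa only [Fin.rev_succ, Fin.rev_castSucc] using (hedge j.rev).2.2.2)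
    (by simpa only [Fin.rev_zero] using hGk) i.rev p
  rwa [Fin.rev_rev, ← card_later_eq_card_earlier_rev] at hG

theorem stmt_16 {Pi : Type*} [Fintype Pi] [DecidableEq Pi] (c k : ℕ)
    (P S : Fin (k + 1) → Option Pi) (cs : Fin (k + 1) → Pi)
    (L G : Fin (k + 1) → Pi → ℕ∞)
    -- edge conditions along the path
    (hedge : ∀ i : Fin k,
      P i.succ = some (cs i.castSucc) ∧
      S i.castSucc = some (cs i.succ) ∧
      (∀ p, L i.succ p = cutc c (L i.castSucc p + optCount (P i.castSucc) p)) ∧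
      (∀ p, G i.castSucc p = cutc c (G i.succ p + optCount (S i.succ) p)))
    -- boundary conditions: source node and target node
    (hL0 : ∀ p, L 0 p = 0) (hP0 : P 0 = none)
    (hGk : ∀ p, G (Fin.last k) p = 0) (hSk : S (Fin.last k) = none) :
    ∀ (i : Fin (k + 1)) (p : Pi),
      L i p = cutc c
        ((Finset.univ.filter (fun j : Fin (k + 1) => (j : ℕ) + 1 < (i : ℕ) ∧ cs j = p)).card
          : ℕ∞) ∧
      G i p = cutc c
        ((Finset.univ.filter (fun j : Fin (k + 1) => (i : ℕ) + 1 < (j : ℕ) ∧ cs j = p)).card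
          : ℕ∞) :=
  stmt_16_general c k P S cs L G hedge hL0 hP0 hGk hSk
end
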